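/- arXiv:1804.01434 — 4 statements merged into one kernel-verified Lean document; each statement's English description precedes it below -/
import Mathlib

section
/- Let X be a compact Hausdorff topological space, let B be a unital C*-algebra, fix finitely many distinct points s₁, ..., s_N ∈ X, and for each i let B_{s_i} be a unital C*-subalgebra of B (containing the unit of B). Define A := {f ∈ C(X, B) : f(s_i) ∈ B_{s_i} for each i ∈ {1, ..., N}}, a unital C*-subalgebra of C(X, B), and set B_s := B for s ∈ X \ {s₁, ..., s_N}. Then for every character φ of A there exist a point s ∈ X and a character ψ of B_s such that φ(f) = ψ(f(s)) for all f ∈ A. -/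
noncomputable section

variable {X : Type*} [TopologicalSpace X] [CompactSpace X] [T2Space X]
variable {B : Type*} [NormedRing B] [StarRing B] [CStarRing B]
  [NormedAlgebra ℂ B] [CompleteSpace B] [StarModule ℂ B]

/-- The subalgebra `A = {f ∈ C(X, B) : f(sᵢ) ∈ Bᵢ for each i}` of `C(X, B)`. -/
def boundarySubalgebra (N : ℕ) (s : Fin N → X) (S : Fin N → StarSubalgebra ℂ B) :
    Subalgebra ℂ C(X, B) where
  carrier := {f | ∀ i, f (s i) ∈ S i}
  mul_mem' := fun hf hg i => by simpa using mul_mem (hf i) (hg i)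
  add_mem' := fun hf hg i => by simpa using add_mem (hf i) (hg i)
  algebraMap_mem' := fun c i => by simpa [Algebra.algebraMap_eq_smul_one] using (S i).algebraMap_mem c

/-- The continuous map `y ↦ g y • b`. -/
def bump (g : C(X,ℝ)) (b : B) : C(X,B) :=
  ⟨fun y => (g y : ℂ) • b, (Complex.continuous_ofReal.comp g.continuous).smul continuous_const⟩

@[simp] lemma bump_apply (g : C(X,ℝ)) (b : B) (y : X) : bump g b y = (g y : ℂ) • b := rfl

set_option maxHeartbeats 2000000 in
/-- Every character of `A` factors as `ψ ∘ ev_s` for some point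
`s ∈ X` and a character `ψ` of `B_s`, where `B_s = B` for `s ∉ {s₁, …, s_N}` and
`B_{sᵢ} = S i`. -/
theorem stmt3 (N : ℕ) (s : Fin N → X) (hs : Function.Injective s)
    (S : Fin N → StarSubalgebra ℂ B) (hS : ∀ i, IsClosed (S i : Set B))
    (φ : boundarySubalgebra N s S →ₐ[ℂ] ℂ) :
    (∃ x : X, (∀ i, x ≠ s i) ∧ ∃ ψ : B →ₐ[ℂ] ℂ,
        ∀ f : boundarySubalgebra N s S, φ f = ψ ((f : C(X, B)) x)) ∨
    (∃ i : Fin N, ∃ ψ : (S i) →ₐ[ℂ] ℂ,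
        ∀ f : boundarySubalgebra N s S, φ f = ψ ⟨(f : C(X, B)) (s i), f.2 i⟩) := by
  classical
  -- trivial cases
  rcases isEmpty_or_nonempty X with hX | hX
  · exfalso
    have h10 : (1 : boundarySubalgebra N s S) = 0 := Subtype.ext (ContinuousMap.ext fun y => (IsEmpty.false y).elim)
    have := map_one φ
    rw [h10, map_zero] at this
    exact one_ne_zero this.symm
  rcases subsingleton_or_nontrivial B with hB | hB
  · exfalso
    have h10 : (1 : boundarySubalgebra N s S) = 0 := Subtype.ext (ContinuousMap.ext fun y => Subsingleton.elim _ _)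
    have := map_one φ
    rw [h10, map_zero] at this
    exact one_ne_zero this.symm
  -- A is a closed subalgebra
  have hAcl : IsClosed ((boundarySubalgebra N s S : Subalgebra ℂ C(X,B)) : Set C(X,B)) := by
    have : ((boundarySubalgebra N s S : Subalgebra ℂ C(X,B)) : Set C(X,B)) = ⋂ i, (fun f : C(X,B) => f (s i)) ⁻¹' (S i) := by
      ext f; simp [boundarySubalgebra, Set.mem_iInter]
    rw [this]
    exact isClosed_iInter fun i => (hS i).preimage (continuous_eval_const (s i))
  haveI : CompleteSpace (boundarySubalgebra N s S) := hAcl.completeSpace_coe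
  haveI : NormOneClass (boundarySubalgebra N s S) := ⟨by
    show ‖((1 : boundarySubalgebra N s S) : C(X,B))‖ = 1
    exact norm_one⟩
  -- the embedding of C(X, ℂ)
  have ιmem : ∀ g : C(X,ℂ), ((Algebra.ofId ℂ B).compLeftContinuous ℂ
      (continuous_algebraMap ℂ B)) g ∈ boundarySubalgebra N s S := by
    intro g i
    exact (S i).algebraMap_mem (g (s i))
  set ι : C(X,ℂ) →ₐ[ℂ] boundarySubalgebra N s S :=
    (((Algebra.ofId ℂ B).compLeftContinuous ℂ (continuous_algebraMap ℂ B))).codRestrict (boundarySubalgebra N s S) ιmem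
    with hι
  have hιval : ∀ (g : C(X,ℂ)) (y : X), ((ι g : boundarySubalgebra N s S) : C(X,B)) y = algebraMap ℂ B (g y) :=
    fun g y => rfl
  -- the induced character on C(X, ℂ) and the point x
  set Φ : C(X,ℂ) →ₐ[ℂ] ℂ := φ.comp ι with hΦdef
  set x : X := (WeakDual.CharacterSpace.homeoEval X ℂ).symm
    (WeakDual.CharacterSpace.equivAlgHom.symm Φ) with hxdef
  have hΦ : ∀ g : C(X,ℂ), φ (ι g) = g x := by
    intro g
    have h1 : (WeakDual.CharacterSpace.homeoEval X ℂ) x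
        = WeakDual.CharacterSpace.equivAlgHom.symm Φ :=
      (WeakDual.CharacterSpace.homeoEval X ℂ).apply_symm_apply _
    have : Φ g = (WeakDual.CharacterSpace.homeoEval X ℂ x) g := by
      rw [h1]
      rw [WeakDual.CharacterSpace.equivAlgHom_symm_coe]
    exact this
  -- φ is bounded
  have hbound : ∀ f : boundarySubalgebra N s S, ‖φ f‖ ≤ ‖f‖ := fun f => AlgHom.norm_apply_le_self φ f
  -- key lemma: φ f depends only on f x
  have key : ∀ f : boundarySubalgebra N s S, (f : C(X,B)) x = 0 → φ f = 0 := by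
    intro f hf
    rw [← norm_le_zero_iff]
    refine le_of_forall_pos_le_add fun ε hε => ?_
    rw [zero_add]
    have hUopen : IsOpen {y : X | ‖(f : C(X,B)) y‖ < ε} :=
      isOpen_lt (by fun_prop) continuous_const
    obtain ⟨g, hg0, hg1, hg01⟩ := exists_continuous_zero_one_of_isClosed
      hUopen.isClosed_compl isClosed_singleton
      (show Disjoint ({y : X | ‖(f : C(X,B)) y‖ < ε}ᶜ) ({x} : Set X) by
        rw [Set.disjoint_singleton_right]
        simp only [Set.mem_compl_iff, Set.mem_setOf_eq, not_not]
        simpa [hf] using hε)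
    set gC : C(X,ℂ) := ⟨fun y => (g y : ℂ), Complex.continuous_ofReal.comp g.continuous⟩
      with hgC
    have hgx : gC x = 1 := by
      have := hg1 (Set.mem_singleton x)
      simp only [hgC, ContinuousMap.coe_mk]
      rw [show g x = 1 from this]
      norm_num
    have h1 : φ (f * ι gC) = φ f := by
      rw [map_mul, hΦ gC, hgx, mul_one]
    have h2 : ‖f * ι gC‖ ≤ ε := by
      show ‖((f * ι gC : boundarySubalgebra N s S) : C(X,B))‖ ≤ ε
      rw [ContinuousMap.norm_le _ hε.le]
      intro y
      have hval : ((f * ι gC : boundarySubalgebra N s S) : C(X,B)) y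
          = (f : C(X,B)) y * ((g y : ℂ) • (1 : B)) := by
        show (f : C(X,B)) y * algebraMap ℂ B (gC y) = _
        rw [Algebra.algebraMap_eq_smul_one]
        rfl
      rw [hval]
      by_cases hy : ‖(f : C(X,B)) y‖ < ε
      · calc ‖(f : C(X,B)) y * ((g y : ℂ) • (1 : B))‖
            ≤ ‖(f : C(X,B)) y‖ * ‖((g y : ℂ) • (1 : B))‖ := norm_mul_le _ _
          _ ≤ ‖(f : C(X,B)) y‖ * 1 := by
              refine mul_le_mul_of_nonneg_left ?_ (norm_nonneg _)
              rw [norm_smul, norm_one, mul_one, Complex.norm_real]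
              rw [Real.norm_eq_abs, abs_of_nonneg (hg01 y).1]
              exact (hg01 y).2
          _ ≤ ε := by rw [mul_one]; exact hy.le
      · have : g y = 0 := hg0 (by simpa using hy)
        simp [this, hε.le]
    calc ‖φ f‖ = ‖φ (f * ι gC)‖ := by rw [h1]
      _ ≤ ‖f * ι gC‖ := hbound _
      _ ≤ ε := h2
  have key2 : ∀ f h : boundarySubalgebra N s S, (f : C(X,B)) x = (h : C(X,B)) x → φ f = φ h := by
    intro f h hfh
    have h0 : ((f - h : boundarySubalgebra N s S) : C(X,B)) x = 0 := by
      have : ((f - h : boundarySubalgebra N s S) : C(X,B)) = (f : C(X,B)) - (h : C(X,B)) := rfl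
      rw [this, ContinuousMap.sub_apply, hfh, sub_self]
    have := key (f - h) h0
    rw [map_sub, sub_eq_zero] at this
    exact this
  by_cases hxs : ∃ i, x = s i
  · -- x is one of the marked points
    obtain ⟨i, hxi⟩ := hxs
    right
    have key2' : ∀ f h : boundarySubalgebra N s S,
        (f : C(X,B)) (s i) = (h : C(X,B)) (s i) → φ f = φ h := by
      intro f h hfh
      exact key2 f h (by rw [hxi]; exact hfh)
    have hclosed : IsClosed (s '' {j | j ≠ i}) := (Set.toFinite _).isClosed
    have hdisj : Disjoint (s '' {j | j ≠ i}) ({s i} : Set X) := by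
      rw [Set.disjoint_singleton_right]
      rintro ⟨j, hj, hji⟩
      exact hj (hs hji)
    obtain ⟨g, hg0, hg1, hg01⟩ :=
      exists_continuous_zero_one_of_isClosed hclosed isClosed_singleton hdisj
    have h1 : g (s i) = 1 := hg1 rfl
    have Fmem : ∀ b : S i, bump g (b : B) ∈ boundarySubalgebra N s S := by
      intro b j
      by_cases hj : j = i
      · subst hj
        simpa [h1] using b.2
      · have : g (s j) = 0 := hg0 ⟨j, hj, rfl⟩
        simp only [bump_apply, this, Complex.ofReal_zero, zero_smul]
        exact zero_mem _
    set F : S i → boundarySubalgebra N s S := fun b => ⟨bump g (b : B), Fmem b⟩ with hFdef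
    have hF : ∀ b : S i, ((F b : boundarySubalgebra N s S) : C(X,B)) (s i) = (b : B) := by
      intro b
      simp [hFdef, h1]
    refine ⟨i, ⟨⟨⟨⟨fun b => φ (F b), ?_⟩, ?_⟩, ?_, ?_⟩, ?_⟩, ?_⟩
    · exact (key2' (F 1) 1 (by rw [hF]; rfl)).trans (map_one φ)
    · intro a b
      show φ (F (a * b)) = φ (F a) * φ (F b)
      rw [← map_mul]
      refine key2' _ _ ?_
      have : ((F a * F b : boundarySubalgebra N s S) : C(X,B)) (s i)
          = ((F a : boundarySubalgebra N s S) : C(X,B)) (s i)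
            * ((F b : boundarySubalgebra N s S) : C(X,B)) (s i) := rfl
      rw [hF, this, hF, hF]
      norm_cast
    · exact (key2' (F 0) 0 (by rw [hF]; rfl)).trans (map_zero φ)
    · intro a b
      show φ (F (a + b)) = φ (F a) + φ (F b)
      rw [← map_add]
      refine key2' _ _ ?_
      have : ((F a + F b : boundarySubalgebra N s S) : C(X,B)) (s i)
          = ((F a : boundarySubalgebra N s S) : C(X,B)) (s i)
            + ((F b : boundarySubalgebra N s S) : C(X,B)) (s i) := rfl
      rw [hF, this, hF, hF]
      norm_cast
    · intro c
      show φ (F (algebraMap ℂ (S i) c)) = algebraMap ℂ ℂ c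
      rw [← φ.commutes c]
      refine key2' _ _ ?_
      rw [hF]
      rfl
    · intro f
      exact key2' f (F ⟨(f : C(X,B)) (s i), f.2 i⟩)
        (hF ⟨(f : C(X,B)) (s i), f.2 i⟩).symm
  · -- x is not a marked point
    left
    refine ⟨x, fun i hi => hxs ⟨i, hi⟩, ?_⟩
    have hclosed : IsClosed (Set.range s) := (Set.finite_range s).isClosed
    have hdisj : Disjoint (Set.range s) ({x} : Set X) := by
      rw [Set.disjoint_singleton_right]
      rintro ⟨j, hj⟩
      exact hxs ⟨j, hj.symm⟩
    obtain ⟨g, hg0, hg1, hg01⟩ :=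
      exists_continuous_zero_one_of_isClosed hclosed isClosed_singleton hdisj
    have h1 : g x = 1 := hg1 rfl
    have Fmem : ∀ b : B, bump g b ∈ boundarySubalgebra N s S := by
      intro b j
      have : g (s j) = 0 := hg0 ⟨j, rfl⟩
      simp only [bump_apply, this, Complex.ofReal_zero, zero_smul]
      exact zero_mem _
    set F : B → boundarySubalgebra N s S := fun b => ⟨bump g b, Fmem b⟩ with hFdef
    have hF : ∀ b : B, ((F b : boundarySubalgebra N s S) : C(X,B)) x = b := by
      intro b
      simp [hFdef, h1]
    refine ⟨⟨⟨⟨⟨fun b => φ (F b), ?_⟩, ?_⟩, ?_, ?_⟩, ?_⟩, ?_⟩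
    · exact (key2 (F 1) 1 (by rw [hF]; rfl)).trans (map_one φ)
    · intro a b
      show φ (F (a * b)) = φ (F a) * φ (F b)
      rw [← map_mul]
      refine key2 _ _ ?_
      have : ((F a * F b : boundarySubalgebra N s S) : C(X,B)) x
          = ((F a : boundarySubalgebra N s S) : C(X,B)) x
            * ((F b : boundarySubalgebra N s S) : C(X,B)) x := rfl
      rw [hF, this, hF, hF]
    · exact (key2 (F 0) 0 (by rw [hF]; rfl)).trans (map_zero φ)
    · intro a b
      show φ (F (a + b)) = φ (F a) + φ (F b)
      rw [← map_add]
      refine key2 _ _ ?_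
      have : ((F a + F b : boundarySubalgebra N s S) : C(X,B)) x
          = ((F a : boundarySubalgebra N s S) : C(X,B)) x
            + ((F b : boundarySubalgebra N s S) : C(X,B)) x := rfl
      rw [hF, this, hF, hF]
    · intro c
      show φ (F (algebraMap ℂ B c)) = algebraMap ℂ ℂ c
      rw [← φ.commutes c]
      refine key2 _ _ ?_
      rw [hF]
      rfl
    · intro f
      exact key2 f (F ((f : C(X,B)) x)) (hF _).symm
end
end

section
/- Let A be a unital normed algebra over ℂ that is finite-dimensional as a complex vector space. Then the set of invertible elements of A is path-connected. -/
/-!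
The complex line `z ↦ (1 - z) • 1 + z • y` through `1` and a unit `y` leaves the units only where
`1 - z⁻¹` lies in the spectrum of `y`, and that spectrum is finite because it consists of roots of
the minimal polynomial of `y`. The complement of a finite set in `ℂ` is path-connected, so a path
from `0` to `1` avoiding the bad parameters is carried to a path of units from `1` to `y`.
-/

theorem spectrum.subset_setOf_isRoot_minpoly {𝕜 A : Type*} [Field 𝕜] [Ring A] [Algebra 𝕜 A]
    (a : A) : spectrum 𝕜 a ⊆ {k | (minpoly 𝕜 a).IsRoot k} := by
  intro k hk
  have h := spectrum.subset_polynomial_aeval a (minpoly 𝕜 a) ⟨k, hk, rfl⟩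
  rw [minpoly.aeval, spectrum.mem_iff, sub_zero] at h
  by_contra hk0
  exact h ((Ne.isUnit hk0).map (algebraMap 𝕜 A))

theorem spectrum.finite_of_finiteDimensional {𝕜 A : Type*} [Field 𝕜] [Ring A] [Algebra 𝕜 A]
    [FiniteDimensional 𝕜 A] (a : A) : (spectrum 𝕜 a).Finite :=
  (Polynomial.finite_setOfPred_isRoot (minpoly.ne_zero (.of_finite 𝕜 a))).subset
    (subset_setOf_isRoot_minpoly a)

theorem isUnit_lineMap_one_of_notMem_spectrum {𝕜 A : Type*} [Field 𝕜] [Ring A]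
    [Algebra 𝕜 A] {y : A} {z : 𝕜} (hz : 1 - z⁻¹ ∉ spectrum 𝕜 y) :
    IsUnit (AffineMap.lineMap (1 : A) y z) := by
  rcases eq_or_ne z 0 with rfl | hz0
  · simp
  have hscal : -z * (1 - z⁻¹) = 1 - z := by field_simp; ring
  have h : AffineMap.lineMap (1 : A) y z = (-z) • (algebraMap 𝕜 A (1 - z⁻¹) - y) := by
    rw [AffineMap.lineMap_apply_module, smul_sub, Algebra.algebraMap_eq_smul_one, smul_smul,
      hscal, neg_smul, sub_neg_eq_add]
  rw [h, Algebra.smul_def]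
  exact ((neg_ne_zero.mpr hz0).isUnit.map _).mul (spectrum.notMem_iff.mp hz)

theorem finite_setOf_not_isUnit_lineMap_one {𝕜 A : Type*} [Field 𝕜] [Ring A] [Algebra 𝕜 A]
    [FiniteDimensional 𝕜 A] (y : A) :
    {z : 𝕜 | ¬IsUnit (AffineMap.lineMap (1 : A) y z)}.Finite := by
  have hinj : Function.Injective fun z : 𝕜 ↦ 1 - z⁻¹ :=
    sub_right_injective.comp inv_injective
  refine ((spectrum.finite_of_finiteDimensional y).preimage hinj.injOn).subset fun z hz ↦ ?_
  by_contra hzσ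
  exact hz (isUnit_lineMap_one_of_notMem_spectrum hzσ)

/-- In a finite-dimensional unital normed algebra over `ℂ`, the
set of invertible elements is path-connected. -/
theorem stmt8 (A : Type*) [NormedRing A] [NormedAlgebra ℂ A]
    [FiniteDimensional ℂ A] :
    IsPathConnected {a : A | IsUnit a} := by
  refine ⟨1, isUnit_one, fun y hy ↦ ?_⟩
  set S := {z : ℂ | ¬IsUnit (AffineMap.lineMap (1 : A) y z)}
  have hSc : IsPathConnected Sᶜ :=
    (finite_setOf_not_isUnit_lineMap_one y).countable.isPathConnected_compl_of_one_lt_rank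
      (by rw [Complex.rank_real_complex]; exact Cardinal.one_lt_two)
  have h01 : JoinedIn Sᶜ 0 1 :=
    hSc.joinedIn 0 (by simp [S]) 1 (by simpa [S] using hy)
  have hline := h01.map (AffineMap.lineMap_continuous (p := (1 : A)) (q := y))
  simp only [AffineMap.lineMap_apply_zero, AffineMap.lineMap_apply_one] at hline
  exact hline.mono (Set.image_subset_iff.mpr fun z hz ↦ not_not.mp hz)
end

section
/- Let p ≥ 2 and k ≥ 1 be integers and set ω := exp(2πi/p^{2k}) ∈ ℂ, a primitive p^{2k}-th root of unity. Let S³ := {z ∈ ℂ² : ‖z‖ = 1}. Then there exists a continuous map γ : S³ → S³ such that γ(ω·z) = ω^{p^k}·γ(z) for every z ∈ S³ (with · denoting scalar multiplication on ℂ²), and γ is homotopic to a constant map. -/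
noncomputable section

open Complex

/-- The unit sphere `S³` of `ℂ²`. -/
abbrev S3 := Metric.sphere (0 : EuclideanSpace ℂ (Fin 2)) 1

/-- Coordinatewise multiplication by a unit complex scalar, as a self-map of `S³`. -/
def rotS3 (c : ℂ) (hc : ‖c‖ = 1) (z : S3) : S3 := by
  refine ⟨c • (z : EuclideanSpace ℂ (Fin 2)), ?_⟩
  have hz := mem_sphere_zero_iff_norm.mp z.2
  simp [mem_sphere_zero_iff_norm, norm_smul, hz, hc]

/-!
Write `m = pᵏ`, so that `ω` is a primitive `m²`-th root of unity. The polynomial map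
`F (z₀, z₁) = (z₀^{m+1} z̄₁, z₁^m - z₀^{m²+m})` satisfies `F (c z) = c^m F z` for every
unit `c` with `c^{m²} = 1`, and it has no zero on `S³`, so `γ = F / ‖F‖` is equivariant.
Where the second coordinate of `F` vanishes, the first one, `A`, has `A^m = |z₀^{m²+m}|² ≥ 0`;
hence `γ` misses the point `(ζ, 0)` for any `ζ` with `ζ^m = -1`. A map into a sphere that misses
a point is null-homotopic, by the straight-line homotopy to the antipode of that point.
-/

open Metric

section Sphere

variable {X E : Type*} [TopologicalSpace X] [NormedAddCommGroup E] [NormedSpace ℝ E]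

theorem sub_smul_sub_smul_ne_zero {u v : E} (huv : u ≠ v) (hn : ‖u‖ = ‖v‖) (t : ℝ) :
    (1 - t) • u - t • v ≠ 0 := by
  intro h
  have hu : ‖u‖ ≠ 0 := fun hu =>
    huv ((norm_eq_zero.mp hu).trans (norm_eq_zero.mp (hn ▸ hu)).symm)
  have heq : (1 - t) • u = t • v := sub_eq_zero.mp h
  have habs : |1 - t| = |t| := by
    have := congrArg norm heq
    rwa [norm_smul, norm_smul, ← hn, Real.norm_eq_abs, Real.norm_eq_abs,
      mul_left_inj' hu] at this
  rcases abs_eq_abs.mp habs with ht | ht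
  · have ht' : t ≠ 0 := by rintro rfl; norm_num at ht
    rw [ht] at heq
    exact huv (smul_right_injective E ht' heq)
  · linarith

namespace ContinuousMap

def normalize (g : C(X, E)) (hg : ∀ x, g x ≠ 0) : C(X, sphere (0 : E) 1) where
  toFun x := ⟨‖g x‖⁻¹ • g x, mem_sphere_zero_iff_norm.mpr (norm_smul_inv_norm (hg x))⟩
  continuous_toFun :=
    ((g.continuous.norm.inv₀ fun x => norm_ne_zero_iff.mpr (hg x)).smul g.continuous).subtype_mk _

variable (g : C(X, E)) (hg : ∀ x, g x ≠ 0)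

@[simp]
theorem coe_normalize_apply (x : X) : (g.normalize hg x : E) = ‖g x‖⁻¹ • g x := rfl

theorem normalize_apply_of_norm_eq_one {x : X} (hx : ‖g x‖ = 1) :
    (g.normalize hg x : E) = g x := by
  rw [coe_normalize_apply, hx, inv_one, one_smul]

theorem eq_norm_smul_of_normalize_apply_eq {x : X} {q : sphere (0 : E) 1}
    (h : g.normalize hg x = q) : g x = ‖g x‖ • (q : E) := by
  rw [← h, coe_normalize_apply, smul_smul, mul_inv_cancel₀ (norm_ne_zero_iff.mpr (hg x)),
    one_smul]

theorem homotopic_const_neg_of_ne (f : C(X, sphere (0 : E) 1)) (q : sphere (0 : E) 1)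
    (hf : ∀ x, f x ≠ q) : f.Homotopic (const X (-q)) := by
  have hunit (v : sphere (0 : E) 1) : ‖(v : E)‖ = 1 := mem_sphere_zero_iff_norm.mp v.2
  let segment : C(unitInterval × X, E) :=
    ⟨fun tx => (1 - (tx.1 : ℝ)) • (f tx.2 : E) - (tx.1 : ℝ) • (q : E), by fun_prop⟩
  have hsegment (tx : unitInterval × X) : segment tx ≠ 0 :=
    sub_smul_sub_smul_ne_zero (fun h => hf tx.2 (Subtype.ext h)) (by rw [hunit, hunit]) _
  refine ⟨⟨segment.normalize hsegment, fun x => Subtype.ext ?_, fun x => Subtype.ext ?_⟩⟩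
  · exact (normalize_apply_of_norm_eq_one _ _ (by simp [segment, hunit])).trans (by simp [segment])
  · exact (normalize_apply_of_norm_eq_one _ _ (by simp [segment, hunit])).trans (by simp [segment])

end ContinuousMap

end Sphere

section Twist

open ComplexConjugate

def twist (m : ℕ) (z : EuclideanSpace ℂ (Fin 2)) : EuclideanSpace ℂ (Fin 2) :=
  !₂[z 0 ^ (m + 1) * conj (z 1), z 1 ^ m - z 0 ^ (m * m + m)]

variable {m : ℕ}

@[simp] theorem twist_apply_zero (z : EuclideanSpace ℂ (Fin 2)) :
    twist m z 0 = z 0 ^ (m + 1) * conj (z 1) := rfl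

@[simp] theorem twist_apply_one (z : EuclideanSpace ℂ (Fin 2)) :
    twist m z 1 = z 1 ^ m - z 0 ^ (m * m + m) := rfl

@[fun_prop]
theorem continuous_twist : Continuous (twist m) := by
  unfold twist; fun_prop

theorem twist_smul {c : ℂ} (hc : ‖c‖ = 1) (hcm : c ^ (m * m) = 1)
    (z : EuclideanSpace ℂ (Fin 2)) :
    twist m (c • z) = c ^ m • twist m z := by
  have hcc : c * conj c = 1 := by
    rw [mul_conj, normSq_eq_norm_sq, hc]; norm_num
  ext i
  fin_cases i
  · show twist m (c • z) 0 = c ^ m * twist m z 0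
    simp only [twist_apply_zero, PiLp.smul_apply, smul_eq_mul, map_mul, mul_pow]
    linear_combination c ^ m * z 0 ^ (m + 1) * conj (z 1) * hcc
  · show twist m (c • z) 1 = c ^ m * twist m z 1
    simp only [twist_apply_one, PiLp.smul_apply, smul_eq_mul, mul_pow]
    linear_combination -(c ^ m * z 0 ^ (m * m + m)) * hcm

theorem twist_ne_zero (hm : m ≠ 0) {z : EuclideanSpace ℂ (Fin 2)} (hz : z ≠ 0) :
    twist m z ≠ 0 := by
  intro h
  have hA : z 0 ^ (m + 1) * conj (z 1) = 0 := by simpa using congrArg (· 0) h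
  have hB : z 1 ^ m = z 0 ^ (m * m + m) := sub_eq_zero.mp (by simpa using congrArg (· 1) h)
  have hz0 : z 0 = 0 := by
    rcases mul_eq_zero.mp hA with h0 | h1
    · exact pow_eq_zero_iff (Nat.succ_ne_zero m) |>.mp h0
    · have h1 : z 1 = 0 := by simpa using h1
      rw [h1, zero_pow hm] at hB
      exact pow_eq_zero_iff (by positivity) |>.mp hB.symm
  have hz1 : z 1 = 0 := by
    rw [hz0, zero_pow (by positivity)] at hB
    exact pow_eq_zero_iff hm |>.mp hB
  exact hz (by ext i; fin_cases i <;> simp [hz0, hz1])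

theorem twist_apply_zero_pow_of_twist_apply_one_eq_zero {z : EuclideanSpace ℂ (Fin 2)}
    (h : twist m z 1 = 0) : twist m z 0 ^ m = (normSq (z 0 ^ (m * m + m)) : ℂ) := by
  have hB : z 1 ^ m = z 0 ^ (m * m + m) := sub_eq_zero.mp h
  rw [twist_apply_zero, mul_pow, ← pow_mul, ← map_pow, hB, ← mul_conj,
    show (m + 1) * m = m * m + m by ring]

theorem twist_ne_smul {ζ : ℂ} (hζ : ζ ^ m = -1) (z : EuclideanSpace ℂ (Fin 2)) {r : ℝ}
    (hr : 0 < r) : twist m z ≠ r • !₂[ζ, 0] := by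
  intro h
  have h1 : twist m z 1 = 0 := by simpa using congrArg (· 1) h
  have h0 : twist m z 0 = r * ζ := by simpa using congrArg (· 0) h
  have hpow := twist_apply_zero_pow_of_twist_apply_one_eq_zero h1
  rw [h0, mul_pow, hζ, mul_neg_one, ← ofReal_pow, ← ofReal_neg, ofReal_inj] at hpow
  nlinarith [normSq_nonneg (z 0 ^ (m * m + m)), pow_pos hr m]

end Twist

section SphereMap

variable {m : ℕ}

theorem twist_coe_S3_ne_zero (hm : m ≠ 0) (z : S3) : twist m z ≠ 0 :=
  twist_ne_zero hm (ne_zero_of_mem_unit_sphere z)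

def twistS3 (m : ℕ) (hm : m ≠ 0) : C(S3, S3) :=
  ContinuousMap.normalize ⟨fun z => twist m z, by fun_prop⟩ (twist_coe_S3_ne_zero hm)

theorem twistS3_rotS3 (hm : m ≠ 0) {c : ℂ} (hc : ‖c‖ = 1) (hcm : c ^ (m * m) = 1)
    (z : S3) :
    twistS3 m hm (rotS3 c hc z) =
      rotS3 (c ^ m) (by rw [norm_pow, hc, one_pow]) (twistS3 m hm z) := by
  apply Subtype.ext
  change ‖twist m (c • (z : _))‖⁻¹ • twist m (c • (z : _)) =
    c ^ m • (‖twist m z‖⁻¹ • twist m z)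
  rw [twist_smul hc hcm, norm_smul, norm_pow, hc, one_pow, one_mul, smul_comm]

def S3.ofFirstCoord (ζ : ℂ) (hζ : ‖ζ‖ = 1) : S3 :=
  ⟨!₂[ζ, 0], mem_sphere_zero_iff_norm.mpr (by simp [EuclideanSpace.norm_eq, hζ])⟩

theorem twistS3_ne_ofFirstCoord (hm : m ≠ 0) {ζ : ℂ} (hζ : ‖ζ‖ = 1) (hζm : ζ ^ m = -1)
    (z : S3) :
    twistS3 m hm z ≠ S3.ofFirstCoord ζ hζ := fun h =>
  twist_ne_smul hζm z (norm_pos_iff.mpr (twist_coe_S3_ne_zero hm z))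
    (ContinuousMap.eq_norm_smul_of_normalize_apply_eq _ _ h)

end SphereMap

theorem exp_two_pi_div_mul_I_pow_self {n : ℕ} (hn : n ≠ 0) :
    exp ((2 * Real.pi / n : ℝ) * I) ^ n = 1 := by
  convert (isPrimitiveRoot_exp n hn).pow_eq_one using 3
  push_cast; ring

theorem exp_pi_div_mul_I_pow_self {n : ℕ} (hn : n ≠ 0) :
    exp ((Real.pi / n : ℝ) * I) ^ n = -1 := by
  rw [← exp_nat_mul, ← exp_pi_mul_I]
  congr 1
  push_cast
  field_simp

/-- With `ω = exp(2πi/p^{2k})`, there is a continuous self-map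
`γ` of `S³` with `γ(ω·z) = ω^{pᵏ}·γ(z)` for all `z`, which is homotopic to a
constant map. -/
theorem stmt10 (p k : ℕ) (hp : 2 ≤ p) :
    ∃ γ : C(S3, S3),
      (∀ z : S3,
        γ (rotS3 (Complex.exp ((2 * Real.pi / (p ^ (2 * k)) : ℝ) * Complex.I))
            (Complex.norm_exp_ofReal_mul_I _) z) =
          rotS3 ((Complex.exp ((2 * Real.pi / (p ^ (2 * k)) : ℝ) * Complex.I)) ^ p ^ k)
            (by rw [norm_pow, Complex.norm_exp_ofReal_mul_I, one_pow]) (γ z)) ∧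
      ∃ c : S3, ContinuousMap.Homotopic γ (ContinuousMap.const S3 c) := by
  have hm : p ^ k ≠ 0 := pow_ne_zero k (by omega)
  have hω : exp ((2 * Real.pi / (p ^ (2 * k)) : ℝ) * I) ^ (p ^ k * p ^ k) = 1 := by
    rw [← pow_add, ← two_mul]
    exact_mod_cast exp_two_pi_div_mul_I_pow_self (pow_ne_zero (2 * k) (by omega : p ≠ 0))
  have hmissed :=
    twistS3_ne_ofFirstCoord hm (norm_exp_ofReal_mul_I _) (exp_pi_div_mul_I_pow_self hm)
  exact ⟨twistS3 (p ^ k) hm, twistS3_rotS3 hm _ hω, _,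
    ContinuousMap.homotopic_const_neg_of_ne _ _ hmissed⟩
end
end

section
/- Let q ≥ 2 be an integer and set ζ := exp(2πi/q). Let S³ := {z ∈ ℂ² : ‖z‖ = 1}. Then there exists a continuous map g : S³ → (ℤ/qℤ)^{*4} such that g(ζ·z) = g(z) + 1̄ for every z ∈ S³, where 1̄ denotes the class of 1 in ℤ/qℤ, · denotes scalar multiplication on ℂ², and + denotes the diagonal action. -/
noncomputable section

/-- The equivalence relation defining the join `G^{*m}`: pairs `(t, g)` in
`Δ_{m-1} × G^m` are identified iff the simplex coordinates agree and the group
coordinates agree at every index where the simplex coordinate is nonzero. -/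
def JoinRel (G : Type*) [TopologicalSpace G] (m : ℕ) :
    (stdSimplex ℝ (Fin m) × (Fin m → G)) → (stdSimplex ℝ (Fin m) × (Fin m → G)) → Prop :=
  fun p q => p.1 = q.1 ∧ ∀ i, (p.1 : Fin m → ℝ) i ≠ 0 → p.2 i = q.2 i

/-- The `m`-fold join `G^{*m}`, with the quotient topology. -/
def Join (G : Type*) [TopologicalSpace G] (m : ℕ) : Type _ :=
  Quot (JoinRel G m)

instance (G : Type*) [TopologicalSpace G] (m : ℕ) : TopologicalSpace (Join G m) :=
  inferInstanceAs (TopologicalSpace (Quot (JoinRel G m)))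

/-- The diagonal action of `G` (written additively) on the join `G^{*m}`. -/
def Join.addAct {G : Type*} [TopologicalSpace G] [AddGroup G] {m : ℕ}
    (ξ : Join G m) (c : G) : Join G m :=
  Quot.map (fun p => (p.1, fun i => p.2 i + c))
    (fun _ _ h => ⟨h.1, fun i hi => by simp [h.2 i hi]⟩) ξ

namespace Stmt12Aux
open Real

-- ### basic definitions

def alph (q : ℕ) : ℝ := π / (2 * q)
def cang (q : ℕ) (m : ℤ) : ℝ := (2 * m + 1) * alph q
def rotc (q : ℕ) (m : ℤ) (w : ℂ) : ℂ := w * Complex.exp (-((cang q m : ℝ) : ℂ) * Complex.I)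
def cone (q : ℕ) (m : ℤ) : Set ℂ :=
  {w | Real.cos (alph q) * |(rotc q m w).im| ≤ Real.sin (alph q) * (rotc q m w).re}
def vfun (q : ℕ) (m : ℤ) (w : ℂ) : ℝ :=
  max 0 (min 1 ((q / π) * (rotc q m w).arg + 1 / 2))
def coefA (q : ℕ) (m : ℤ) (w : ℂ) : ℝ := if Even m then 1 - vfun q m w else vfun q m w
def coefB (q : ℕ) (m : ℤ) (w : ℂ) : ℝ := if Even m then vfun q m w else 1 - vfun q m w
def wA (q : ℕ) (m : ℤ) (w : ℂ) : ℝ := ‖w‖ ^ 2 * coefA q m w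
def wB (q : ℕ) (m : ℤ) (w : ℂ) : ℝ := ‖w‖ ^ 2 * coefB q m w
def gAi (m : ℤ) : ℤ := if Even m then m / 2 else (m + 1) / 2
def gBi (m : ℤ) : ℤ := if Even m then m / 2 else (m - 1) / 2
def gA (q : ℕ) (m : ℤ) : ZMod q := (gAi m : ZMod q)
def gB (q : ℕ) (m : ℤ) : ZMod q := (gBi m : ZMod q)
def zet (q : ℕ) : ℂ := Complex.exp (((2 * π / q : ℝ) : ℂ) * Complex.I)

variable (q : ℕ)

-- ### elementary facts

lemma qR_two (hq : 2 ≤ q) : (2:ℝ) ≤ (q:ℝ) := by exact_mod_cast hq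
lemma qR_pos (hq : 2 ≤ q) : (0:ℝ) < q := by have := qR_two q hq; linarith
lemma alph_pos (hq : 2 ≤ q) : 0 < alph q := by
  have := qR_pos q hq; unfold alph; positivity
lemma alph_le (hq : 2 ≤ q) : alph q ≤ π / 4 := by
  have h2 := qR_two q hq
  have := Real.pi_pos
  rw [alph, div_le_div_iff₀ (by linarith) (by norm_num)]
  nlinarith
lemma alph_lt_pi_div_two (hq : 2 ≤ q) : alph q < π / 2 := by
  have := alph_le q hq; have := Real.pi_pos; linarith

/-- key trig inequality, forward direction -/
lemma trig1 {a d : ℝ} (ha0 : 0 < a) (ha : a ≤ π / 2) (hd : |d| ≤ a) :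
    Real.cos a * |Real.sin d| ≤ Real.sin a * Real.cos d := by
  have h1 : 0 ≤ Real.sin (a - d) := by
    apply Real.sin_nonneg_of_nonneg_of_le_pi
    · rcases abs_le.mp hd with ⟨h, h'⟩; linarith
    · rcases abs_le.mp hd with ⟨h, h'⟩; have := Real.pi_pos; linarith
  have h2 : 0 ≤ Real.sin (a + d) := by
    apply Real.sin_nonneg_of_nonneg_of_le_pi
    · rcases abs_le.mp hd with ⟨h, h'⟩; linarith
    · rcases abs_le.mp hd with ⟨h, h'⟩; have := Real.pi_pos; linarith
  rw [Real.sin_sub] at h1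
  rw [Real.sin_add] at h2
  rcases abs_cases (Real.sin d) with ⟨he, _⟩ | ⟨he, _⟩ <;> rw [he] <;> linarith

/-- key trig inequality, converse direction -/
lemma trig2 {a d : ℝ} (ha0 : 0 < a) (ha : a ≤ π / 2) (hd1 : -π < d) (hd2 : d ≤ π)
    (h : Real.cos a * |Real.sin d| ≤ Real.sin a * Real.cos d) : |d| ≤ a := by
  have hsa : 0 < Real.sin a := Real.sin_pos_of_pos_of_lt_pi ha0 (by have := Real.pi_pos; linarith)
  have hca : 0 ≤ Real.cos a := Real.cos_nonneg_of_mem_Icc ⟨by linarith, ha⟩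
  have hcd : 0 ≤ Real.cos d := by
    nlinarith [abs_nonneg (Real.sin d), mul_nonneg hca (abs_nonneg (Real.sin d))]
  -- from cos d ≥ 0 and d ∈ (-π, π] deduce |d| ≤ π/2
  have hd : |d| ≤ π / 2 := by
    by_contra hcon
    push_neg at hcon
    have : Real.cos d < 0 := by
      rcases abs_cases d with ⟨he, _⟩ | ⟨he, _⟩
      · apply Real.cos_neg_of_pi_div_two_lt_of_lt <;> [linarith; (have := Real.pi_pos; linarith)]
      · rw [← Real.cos_neg]
        apply Real.cos_neg_of_pi_div_two_lt_of_lt <;> [linarith; (have := Real.pi_pos; linarith)]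
    linarith
  -- now sin (a - |d|) ≥ 0 with a - |d| ∈ [-π/2, π/2]
  have hsabs : |Real.sin d| = Real.sin |d| := by
    rcases abs_cases d with ⟨he, h0⟩ | ⟨he, h0⟩
    · rw [he, abs_of_nonneg (Real.sin_nonneg_of_nonneg_of_le_pi h0 hd2)]
    · rw [he, Real.sin_neg, abs_of_nonpos (Real.sin_nonpos_of_nonpos_of_neg_pi_le (by linarith) (by linarith))]
  have hcabs : Real.cos d = Real.cos |d| := by
    rcases abs_cases d with ⟨he, _⟩ | ⟨he, _⟩
    · rw [he]
    · rw [he, Real.cos_neg]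
  have hs : 0 ≤ Real.sin (a - |d|) := by
    rw [Real.sin_sub]
    rw [hsabs] at h
    rw [hcabs] at h
    nlinarith
  by_contra hcon
  push_neg at hcon
  have h1 : a - |d| < 0 := by linarith
  have h2 : -π < a - |d| := by have := abs_nonneg d; have := Real.pi_pos; linarith
  have := Real.sin_neg_of_neg_of_neg_pi_lt h1 h2
  linarith

lemma rotc_eq (m : ℤ) (w : ℂ) :
    rotc q m w = (‖w‖ : ℂ) * Complex.exp (((w.arg - cang q m : ℝ) : ℂ) * Complex.I) := by
  conv_lhs => rw [rotc, ← Complex.norm_mul_exp_arg_mul_I w]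
  rw [mul_assoc, ← Complex.exp_add]
  congr 1
  push_cast
  ring_nf

lemma re_rotc (m : ℤ) (w : ℂ) :
    (rotc q m w).re = ‖w‖ * Real.cos (w.arg - cang q m) := by
  rw [rotc_eq, Complex.re_ofReal_mul, Complex.exp_ofReal_mul_I_re]

lemma im_rotc (m : ℤ) (w : ℂ) :
    (rotc q m w).im = ‖w‖ * Real.sin (w.arg - cang q m) := by
  rw [rotc_eq, Complex.im_ofReal_mul, Complex.exp_ofReal_mul_I_im]

lemma abs_rotc (m : ℤ) (w : ℂ) : ‖rotc q m w‖ = ‖w‖ := by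
  rw [rotc]
  simp [Complex.norm_exp]

lemma rotc_ne_zero {m : ℤ} {w : ℂ} (hw : w ≠ 0) : rotc q m w ≠ 0 :=
  mul_ne_zero hw (Complex.exp_ne_zero _)

lemma arg_shift (m : ℤ) {w : ℂ} (hw : w ≠ 0) :
    ∃ n : ℤ, (rotc q m w).arg = w.arg - cang q m + 2 * π * n := by
  have h1 := rotc_eq q m w
  have h2 := Complex.norm_mul_exp_arg_mul_I (rotc q m w)
  rw [abs_rotc] at h2
  rw [← h2] at h1
  have habs : (‖w‖ : ℂ) ≠ 0 := by
    simpa using hw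
  have h3 : Complex.exp (((rotc q m w).arg : ℂ) * Complex.I)
      = Complex.exp (((w.arg - cang q m : ℝ) : ℂ) * Complex.I) :=
    mul_left_cancel₀ habs h1
  obtain ⟨n, hn⟩ := Complex.exp_eq_exp_iff_exists_int.mp h3
  refine ⟨n, ?_⟩
  have him := congrArg Complex.im hn
  simpa [mul_comm] using him


lemma mem_cone_of_angle {m : ℤ} {w : ℂ} (hq : 2 ≤ q)
    (h : |w.arg - cang q m| ≤ alph q) : w ∈ cone q m := by
  have h0 : 0 ≤ ‖w‖ := norm_nonneg w
  have key := trig1 (alph_pos q hq)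
    (by have := alph_le q hq; have := Real.pi_pos; linarith) h
  show Real.cos (alph q) * |(rotc q m w).im| ≤ Real.sin (alph q) * (rotc q m w).re
  rw [re_rotc, im_rotc, abs_mul, abs_of_nonneg h0]
  calc Real.cos (alph q) * (‖w‖ * |Real.sin (w.arg - cang q m)|)
      = ‖w‖ * (Real.cos (alph q) * |Real.sin (w.arg - cang q m)|) := by ring
    _ ≤ ‖w‖ * (Real.sin (alph q) * Real.cos (w.arg - cang q m)) := by
        exact mul_le_mul_of_nonneg_left key h0
    _ = Real.sin (alph q) * (‖w‖ * Real.cos (w.arg - cang q m)) := by ring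

lemma arg_rotc_bound {m : ℤ} {w : ℂ} (hq : 2 ≤ q) (hw : w ≠ 0) (h : w ∈ cone q m) :
    |(rotc q m w).arg| ≤ alph q := by
  set ρ := rotc q m w with hρ
  have hρ0 : ρ ≠ 0 := rotc_ne_zero q hw
  have habs : 0 < ‖ρ‖ := by
    simpa [norm_pos_iff] using hρ0
  have hre : ρ.re = Real.cos ρ.arg * ‖ρ‖ := by
    rw [Complex.cos_arg hρ0]; field_simp
  have him : ρ.im = Real.sin ρ.arg * ‖ρ‖ := by
    rw [Complex.sin_arg]; field_simp
  have h2 : (Real.cos (alph q) * |Real.sin ρ.arg|) * ‖ρ‖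
      ≤ (Real.sin (alph q) * Real.cos ρ.arg) * ‖ρ‖ := by
    have h0 : Real.cos (alph q) * |ρ.im| ≤ Real.sin (alph q) * ρ.re := h
    rw [hre, him, abs_mul, abs_of_nonneg habs.le] at h0
    calc (Real.cos (alph q) * |Real.sin ρ.arg|) * ‖ρ‖
        = Real.cos (alph q) * (|Real.sin ρ.arg| * ‖ρ‖) := by ring
      _ ≤ Real.sin (alph q) * (Real.cos ρ.arg * ‖ρ‖) := h0
      _ = (Real.sin (alph q) * Real.cos ρ.arg) * ‖ρ‖ := by ring
  have h' : Real.cos (alph q) * |Real.sin ρ.arg| ≤ Real.sin (alph q) * Real.cos ρ.arg :=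
    le_of_mul_le_mul_right h2 habs
  exact trig2 (alph_pos q hq)
    (by have := alph_le q hq; have := Real.pi_pos; linarith)
    (Complex.neg_pi_lt_arg ρ) (Complex.arg_le_pi ρ) h'


lemma sigma_lemma {m : ℤ} {w : ℂ} (hq : 2 ≤ q) (hw : w ≠ 0) (h : w ∈ cone q m) :
    ∃ n : ℤ, (m : ℝ) ≤ (q / π) * w.arg - 2 * q * n ∧
      (q / π) * w.arg - 2 * q * n ≤ m + 1 ∧
      vfun q m w = ((q / π) * w.arg - 2 * q * n) - m := by
  obtain ⟨n₀, hn₀⟩ := arg_shift q m hw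
  have hφ : |(rotc q m w).arg| ≤ alph q := arg_rotc_bound q hq hw h
  have hπ : (0:ℝ) < π := Real.pi_pos
  have hqR : (2:ℝ) ≤ (q : ℝ) := by exact_mod_cast hq
  have hq0 : (q:ℝ) ≠ 0 := by linarith
  refine ⟨-n₀, ?_, ?_, ?_⟩
  all_goals {
    have key : (q / π) * (rotc q m w).arg + 1/2
        = ((q / π) * w.arg - 2 * q * (-n₀ : ℤ)) - m := by
      rw [hn₀, cang, alph]
      push_cast
      field_simp
      ring
    have hbound : |(q / π) * (rotc q m w).arg| ≤ 1/2 := by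
      rw [abs_mul, abs_of_nonneg (by positivity : (0:ℝ) ≤ q / π)]
      calc q / π * |(rotc q m w).arg| ≤ q / π * alph q := by
            apply mul_le_mul_of_nonneg_left hφ (by positivity)
        _ = 1/2 := by rw [alph]; field_simp
      
    rcases abs_le.mp hbound with ⟨hb1, hb2⟩
    first
    | linarith
    | (show max 0 (min 1 ((q / π) * (rotc q m w).arg + 1 / 2)) = _
       rw [key, min_eq_right (by linarith), max_eq_right (by linarith)])
  }

lemma exists_cone (hq : 2 ≤ q) (w : ℂ) : ∃ m : ℤ, w ∈ cone q m := by
  by_cases hw : w = 0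
  · refine ⟨0, ?_⟩
    show Real.cos (alph q) * |(rotc q 0 w).im| ≤ Real.sin (alph q) * (rotc q 0 w).re
    simp [rotc, hw]
  · have hπ : (0:ℝ) < π := Real.pi_pos
    have hqR : (2:ℝ) ≤ (q : ℝ) := by exact_mod_cast hq
    have hq0 : (q:ℝ) ≠ 0 := by linarith
    set x : ℝ := (q / π) * w.arg with hx
    refine ⟨⌈x⌉ - 1, mem_cone_of_angle q hq ?_⟩
    have h1 : (⌈x⌉ : ℝ) - 1 ≤ x := by
      have := Int.ceil_lt_add_one x; linarith
    have h2 : x ≤ (⌈x⌉ : ℝ) := Int.le_ceil x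
    have harg : w.arg = x * (π / q) := by
      rw [hx]; field_simp
    have hA : (0:ℝ) < π / (2*q) := by positivity
    have key : x * (π / q) - cang q (⌈x⌉ - 1)
        = (2*x - 2*(⌈x⌉:ℝ) + 1) * (π / (2*q)) := by
      rw [cang, alph]
      push_cast
      field_simp
      ring
    rw [harg, abs_le, alph]
    constructor
    · rw [le_sub_iff_add_le]
      nlinarith [key]
    · rw [sub_le_iff_le_add]
      nlinarith [key]

lemma rotc_periodic (hq0 : q ≠ 0) (m k : ℤ) (w : ℂ) :
    rotc q (m + 2 * q * k) w = rotc q m w := by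
  have hπ : (0:ℝ) < π := Real.pi_pos
  have hqR : (0:ℝ) < (q : ℝ) := by
    have : 0 < q := Nat.pos_of_ne_zero hq0
    exact_mod_cast this
  rw [rotc, rotc]
  congr 1
  have hcang : cang q (m + 2 * q * k) = cang q m + 2 * π * k := by
    rw [cang, cang, alph]
    push_cast
    field_simp
    ring
  rw [hcang]
  rw [show (-(((cang q m + 2 * π * k : ℝ)) : ℂ) * Complex.I)
      = (-((cang q m : ℝ) : ℂ) * Complex.I) + (-k : ℤ) * (2 * (π : ℂ) * Complex.I) by
    push_cast; ring]
  rw [Complex.exp_add, Complex.exp_int_mul_two_pi_mul_I]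
  ring

lemma cone_periodic (hq0 : q ≠ 0) (m k : ℤ) : cone q (m + 2 * q * k) = cone q m := by
  unfold cone
  ext w
  rw [Set.mem_setOf_eq, Set.mem_setOf_eq, rotc_periodic q hq0]

lemma exists_cone_bdd (hq : 2 ≤ q) (w : ℂ) :
    ∃ m : ℤ, 0 ≤ m ∧ m < 2 * q ∧ w ∈ cone q m := by
  obtain ⟨m₀, hm₀⟩ := exists_cone q hq w
  have hq0 : q ≠ 0 := by omega
  have h2q : (0:ℤ) < 2 * q := by
    have : 0 < q := Nat.pos_of_ne_zero hq0
    omega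
  refine ⟨m₀ % (2 * q), Int.emod_nonneg m₀ (by omega), Int.emod_lt_of_pos m₀ h2q, ?_⟩
  have hdecomp : m₀ % (2 * q) + 2 * (q:ℤ) * (m₀ / (2 * q)) = m₀ := by
    have := Int.emod_add_mul_ediv m₀ (2 * q)
    linarith
  have := cone_periodic q hq0 (m₀ % (2 * q)) (m₀ / (2 * q))
  rw [hdecomp] at this
  rw [← this]
  exact hm₀

lemma even_shift {m d : ℤ} (h : Even m) : Even (m + 2 * d) := by
  rcases h with ⟨k, hk⟩; exact ⟨k + d, by omega⟩

lemma not_even_shift {m d : ℤ} (h : ¬ Even m) : ¬ Even (m + 2 * d) := by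
  intro hc; apply h; rcases hc with ⟨k, hk⟩; exact ⟨k - d, by omega⟩

lemma gAi_add (m d : ℤ) : gAi (m + 2 * d) = gAi m + d := by
  unfold gAi
  by_cases h : Even m
  · rw [if_pos h, if_pos (even_shift h)]
    omega
  · rw [if_neg h, if_neg (not_even_shift h)]
    omega

lemma gBi_add (m d : ℤ) : gBi (m + 2 * d) = gBi m + d := by
  unfold gBi
  by_cases h : Even m
  · rw [if_pos h, if_pos (even_shift h)]
    omega
  · rw [if_neg h, if_neg (not_even_shift h)]
    omega

/-- core compatibility of two pieces at a common σ. -/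
lemma pairC {m M : ℤ} {σ : ℝ} (h1 : (m:ℝ) ≤ σ) (h2 : σ ≤ m + 1)
    (h3 : (M:ℝ) ≤ σ) (h4 : σ ≤ M + 1) :
    ((if Even m then 1 - (σ - m) else σ - m) = (if Even M then 1 - (σ - M) else σ - M))
    ∧ ((if Even m then σ - m else 1 - (σ - m)) = (if Even M then σ - M else 1 - (σ - M)))
    ∧ ((if Even m then 1 - (σ - m) else σ - m) ≠ 0 → gAi m = gAi M)
    ∧ ((if Even m then σ - m else 1 - (σ - m)) ≠ 0 → gBi m = gBi M) := by
  have hmM : M ≤ m + 1 := by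
    have : (M:ℝ) ≤ (m:ℝ) + 1 := le_trans h3 h2
    exact_mod_cast this
  have hMm : m ≤ M + 1 := by
    have : (m:ℝ) ≤ (M:ℝ) + 1 := le_trans h1 h4
    exact_mod_cast this
  rcases (by omega : M = m ∨ M = m + 1 ∨ m = M + 1) with rfl | rfl | hm
  · exact ⟨rfl, rfl, fun _ => rfl, fun _ => rfl⟩
  · -- M = m + 1, so σ = m + 1
    have hσ : σ = (m:ℝ) + 1 := le_antisymm h2 (by push_cast at h3 ⊢; linarith)
    subst hσ
    by_cases h : Even m
    · have hM : ¬ Even (m + 1) := by simpa [Int.even_add_one] using h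
      simp only [if_pos h, if_neg hM]
      refine ⟨by push_cast; ring, by push_cast; ring, ?_, ?_⟩
      · intro hc; exact absurd (by push_cast; ring) hc
      · intro _
        simp only [gBi, if_pos h, if_neg hM]
        omega
    · have hM : Even (m + 1) := Int.even_add_one.mpr h
      simp only [if_neg h, if_pos hM]
      refine ⟨by push_cast; ring, by push_cast; ring, ?_, ?_⟩
      · intro _
        simp only [gAi, if_neg h, if_pos hM]
      · intro hc; exact absurd (by push_cast; ring) hc
  · -- m = M + 1, so σ = M + 1 = m
    subst hm
    have hσ : σ = (M:ℝ) + 1 := le_antisymm h4 (by push_cast at h1 ⊢; linarith)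
    subst hσ
    by_cases h : Even M
    · have hm' : ¬ Even (M + 1) := by simpa [Int.even_add_one] using h
      simp only [if_neg hm', if_pos h]
      refine ⟨by push_cast; ring, by push_cast; ring, ?_, ?_⟩
      · intro hc; exact absurd (by push_cast; ring) hc
      · intro _
        simp only [gBi, if_neg hm', if_pos h]
        omega
    · have hm' : Even (M + 1) := Int.even_add_one.mpr h
      simp only [if_pos hm', if_neg h]
      refine ⟨by push_cast; ring, by push_cast; ring, ?_, ?_⟩
      · intro _
        simp only [gAi, if_pos hm', if_neg h]
      · intro hc; exact absurd (by push_cast; ring) hc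

lemma coefA_eq_sigma {m : ℤ} {w : ℂ} {σ : ℝ} (hv : vfun q m w = σ - m) :
    coefA q m w = if Even m then 1 - (σ - (m:ℝ)) else σ - m := by
  rw [coefA, hv]
lemma coefB_eq_sigma {m : ℤ} {w : ℂ} {σ : ℝ} (hv : vfun q m w = σ - m) :
    coefB q m w = if Even m then σ - (m:ℝ) else 1 - (σ - m) := by
  rw [coefB, hv]

lemma gA_cast_shift (m : ℤ) (d : ℤ) : ((gAi (m + 2 * ((q:ℤ) * d)) : ℤ) : ZMod q) = gA q m := by
  rw [gAi_add, gA]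
  push_cast
  simp

lemma gB_cast_shift (m : ℤ) (d : ℤ) : ((gBi (m + 2 * ((q:ℤ) * d)) : ℤ) : ZMod q) = gB q m := by
  rw [gBi_add, gB]
  push_cast
  simp

lemma factor_compat {m m' : ℤ} {w : ℂ} (hq : 2 ≤ q)
    (h : w ∈ cone q m) (h' : w ∈ cone q m') :
    wA q m w = wA q m' w ∧ wB q m w = wB q m' w ∧
      (wA q m w ≠ 0 → gA q m = gA q m') ∧ (wB q m w ≠ 0 → gB q m = gB q m') := by
  by_cases hw : w = 0
  · subst hw
    refine ⟨by simp [wA], by simp [wB], ?_, ?_⟩ <;>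
      · intro hc
        exfalso
        apply hc
        simp [wA, wB]
  · obtain ⟨n, hn1, hn2, hn3⟩ := sigma_lemma q hq hw h
    obtain ⟨n', hn1', hn2', hn3'⟩ := sigma_lemma q hq hw h'
    set x : ℝ := (q / π) * w.arg with hx
    set σ : ℝ := x - 2 * q * n with hσ
    have hval : vfun q m' w = σ - ((m' + 2 * ((q:ℤ) * (n' - n)) : ℤ) : ℝ) := by
      rw [hn3', hσ]
      push_cast
      ring
    have h3 : ((m' + 2 * ((q:ℤ) * (n' - n)) : ℤ) : ℝ) ≤ σ := by
      push_cast
      rw [hσ]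
      push_cast
      linarith
    have h4 : σ ≤ ((m' + 2 * ((q:ℤ) * (n' - n)) : ℤ) : ℝ) + 1 := by
      push_cast
      rw [hσ]
      push_cast
      linarith
    have hparity : Even m' ↔ Even (m' + 2 * ((q:ℤ) * (n' - n))) := by
      constructor
      · intro he; exact even_shift he
      · intro he
        by_contra hc
        exact not_even_shift hc he
    obtain ⟨e1, e2, e3, e4⟩ := pairC hn1 hn2 h3 h4
    have hA' : coefA q m' w
        = if Even (m' + 2 * ((q:ℤ) * (n' - n))) then 1 - (σ - ((m' + 2 * ((q:ℤ) * (n' - n)) : ℤ) : ℝ))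
          else σ - ((m' + 2 * ((q:ℤ) * (n' - n)) : ℤ) : ℝ) := by
      rw [coefA, hval]
      by_cases he : Even m'
      · rw [if_pos he, if_pos (hparity.mp he)]
      · rw [if_neg he, if_neg (fun hc => he (hparity.mpr hc))]
    have hB' : coefB q m' w
        = if Even (m' + 2 * ((q:ℤ) * (n' - n))) then σ - ((m' + 2 * ((q:ℤ) * (n' - n)) : ℤ) : ℝ)
          else 1 - (σ - ((m' + 2 * ((q:ℤ) * (n' - n)) : ℤ) : ℝ)) := by
      rw [coefB, hval]
      by_cases he : Even m'
      · rw [if_pos he, if_pos (hparity.mp he)]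
      · rw [if_neg he, if_neg (fun hc => he (hparity.mpr hc))]
    have hA : coefA q m w = if Even m then 1 - (σ - (m:ℝ)) else σ - m := coefA_eq_sigma q hn3
    have hB : coefB q m w = if Even m then σ - (m:ℝ) else 1 - (σ - m) := coefB_eq_sigma q hn3
    refine ⟨?_, ?_, ?_, ?_⟩
    · rw [wA, wA, hA, hA', e1]
    · rw [wB, wB, hB, hB', e2]
    · intro hne
      have hc0 : coefA q m w ≠ 0 := by
        intro hc; apply hne; rw [wA, hc, mul_zero]
      have hg := e3 (by rw [← hA]; exact hc0)
      calc gA q m = ((gAi (m' + 2 * ((q:ℤ) * (n' - n))) : ℤ) : ZMod q) := by rw [gA, hg]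
        _ = gA q m' := gA_cast_shift q m' (n' - n)
    · intro hne
      have hc0 : coefB q m w ≠ 0 := by
        intro hc; apply hne; rw [wB, hc, mul_zero]
      have hg := e4 (by rw [← hB]; exact hc0)
      calc gB q m = ((gBi (m' + 2 * ((q:ℤ) * (n' - n))) : ℤ) : ZMod q) := by rw [gB, hg]
        _ = gB q m' := gB_cast_shift q m' (n' - n)

-- shift lemmas
lemma rotc_shift (hq0 : q ≠ 0) (m : ℤ) (w : ℂ) :
    rotc q (m + 2) (zet q * w) = rotc q m w := by
  have hπ : (0:ℝ) < π := Real.pi_pos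
  have hqR : (0:ℝ) < (q:ℝ) := by
    exact_mod_cast Nat.pos_of_ne_zero hq0
  rw [rotc, rotc, zet]
  rw [mul_comm (Complex.exp _) w, mul_assoc, ← Complex.exp_add]
  congr 1
  have : cang q (m + 2) = cang q m + 2 * π / q := by
    rw [cang, cang, alph]
    push_cast
    field_simp
    ring
  rw [this]
  push_cast
  ring

lemma cone_shift (hq0 : q ≠ 0) (m : ℤ) (w : ℂ) :
    zet q * w ∈ cone q (m + 2) ↔ w ∈ cone q m := by
  unfold cone
  rw [Set.mem_setOf_eq, Set.mem_setOf_eq, rotc_shift q hq0]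

lemma vfun_shift (hq0 : q ≠ 0) (m : ℤ) (w : ℂ) :
    vfun q (m + 2) (zet q * w) = vfun q m w := by
  unfold vfun
  rw [rotc_shift q hq0]

lemma abs_zet : ‖zet q‖ = 1 := by
  rw [zet]
  exact Complex.norm_exp_ofReal_mul_I _

lemma even_add_two (m : ℤ) : Even (m + 2) ↔ Even m := by
  constructor
  · intro ⟨k, hk⟩; exact ⟨k - 1, by omega⟩
  · intro ⟨k, hk⟩; exact ⟨k + 1, by omega⟩

lemma coefA_shift (hq0 : q ≠ 0) (m : ℤ) (w : ℂ) :
    coefA q (m + 2) (zet q * w) = coefA q m w := by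
  unfold coefA
  rw [vfun_shift q hq0]
  by_cases h : Even m
  · rw [if_pos h, if_pos ((even_add_two m).mpr h)]
  · rw [if_neg h, if_neg (fun hc => h ((even_add_two m).mp hc))]

lemma coefB_shift (hq0 : q ≠ 0) (m : ℤ) (w : ℂ) :
    coefB q (m + 2) (zet q * w) = coefB q m w := by
  unfold coefB
  rw [vfun_shift q hq0]
  by_cases h : Even m
  · rw [if_pos h, if_pos ((even_add_two m).mpr h)]
  · rw [if_neg h, if_neg (fun hc => h ((even_add_two m).mp hc))]

lemma wA_shift (hq0 : q ≠ 0) (m : ℤ) (w : ℂ) :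
    wA q (m + 2) (zet q * w) = wA q m w := by
  rw [wA, wA, coefA_shift q hq0, norm_mul, abs_zet, one_mul]

lemma wB_shift (hq0 : q ≠ 0) (m : ℤ) (w : ℂ) :
    wB q (m + 2) (zet q * w) = wB q m w := by
  rw [wB, wB, coefB_shift q hq0, norm_mul, abs_zet, one_mul]

-- bounds for vfun / coefs
lemma vfun_nonneg (m : ℤ) (w : ℂ) : 0 ≤ vfun q m w := le_max_left _ _
lemma vfun_le_one (m : ℤ) (w : ℂ) : vfun q m w ≤ 1 :=
  max_le (by norm_num) (min_le_left _ _)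
lemma coefA_nonneg (m : ℤ) (w : ℂ) : 0 ≤ coefA q m w := by
  unfold coefA
  split_ifs
  · have := vfun_le_one q m w; linarith
  · exact vfun_nonneg q m w
lemma coefA_le_one (m : ℤ) (w : ℂ) : coefA q m w ≤ 1 := by
  unfold coefA
  split_ifs
  · have := vfun_nonneg q m w; linarith
  · exact vfun_le_one q m w
lemma coefB_nonneg (m : ℤ) (w : ℂ) : 0 ≤ coefB q m w := by
  unfold coefB
  split_ifs
  · exact vfun_nonneg q m w
  · have := vfun_le_one q m w; linarith
lemma coefB_le_one (m : ℤ) (w : ℂ) : coefB q m w ≤ 1 := by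
  unfold coefB
  split_ifs
  · exact vfun_le_one q m w
  · have := vfun_nonneg q m w; linarith
lemma wA_nonneg (m : ℤ) (w : ℂ) : 0 ≤ wA q m w :=
  mul_nonneg (by positivity) (coefA_nonneg q m w)
lemma wB_nonneg (m : ℤ) (w : ℂ) : 0 ≤ wB q m w :=
  mul_nonneg (by positivity) (coefB_nonneg q m w)
lemma wA_add_wB (m : ℤ) (w : ℂ) : wA q m w + wB q m w = ‖w‖ ^ 2 := by
  rw [wA, wB, ← mul_add]
  unfold coefA coefB
  split_ifs <;> ring

-- topology
lemma cont_rotc (m : ℤ) : Continuous (rotc q m) := by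
  unfold rotc
  exact continuous_id.mul continuous_const

lemma cone_closed (m : ℤ) : IsClosed (cone q m) := by
  apply isClosed_le
  · exact continuous_const.mul ((Complex.continuous_im.comp (cont_rotc q m)).abs)
  · exact continuous_const.mul (Complex.continuous_re.comp (cont_rotc q m))

lemma contOn_wA {m : ℤ} (hq : 2 ≤ q) : ContinuousOn (wA q m) (cone q m) := by
  intro w hw
  by_cases hw0 : w = 0
  · subst hw0
    have h0 : wA q m 0 = 0 := by simp [wA]
    rw [ContinuousWithinAt, h0]
    have hle : ∀ t : ℂ, wA q m t ≤ ‖t‖ ^ 2 := fun t =>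
      calc wA q m t = ‖t‖ ^ 2 * coefA q m t := rfl
        _ ≤ ‖t‖ ^ 2 * 1 :=
          mul_le_mul_of_nonneg_left (coefA_le_one q m t) (by positivity)
        _ = ‖t‖ ^ 2 := by ring
    have hc : Continuous (fun t : ℂ => ‖t‖ ^ 2) := continuous_norm.pow 2
    have htend := (hc.tendsto 0).mono_left
      (nhdsWithin_le_nhds : nhdsWithin (0:ℂ) (cone q m) ≤ _)
    refine squeeze_zero (fun t => wA_nonneg q m t) hle ?_
    simpa using htend
  · apply ContinuousAt.continuousWithinAt
    have hρ0 : rotc q m w ≠ 0 := rotc_ne_zero q hw0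
    have hargb : |(rotc q m w).arg| ≤ alph q := arg_rotc_bound q hq hw0 hw
    have hslit : rotc q m w ∈ Complex.slitPlane := by
      rw [Complex.mem_slitPlane_iff_arg]
      refine ⟨?_, hρ0⟩
      intro hc
      rw [hc] at hargb
      have h1 := alph_le q hq
      have := Real.pi_pos
      rw [abs_of_pos Real.pi_pos] at hargb
      linarith
    have harg : ContinuousAt (fun t : ℂ => (rotc q m t).arg) w :=
      (Complex.continuousAt_arg hslit).comp (cont_rotc q m).continuousAt
    have hv : ContinuousAt (vfun q m) w := by
      unfold vfun
      exact continuousAt_const.max (continuousAt_const.min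
        ((continuousAt_const.mul harg).add continuousAt_const))
    have habs : ContinuousAt (fun t : ℂ => ‖t‖ ^ 2) w :=
      (continuous_norm.pow 2).continuousAt
    unfold wA coefA
    by_cases h : Even m
    · simp only [if_pos h]
      exact habs.mul (continuousAt_const.sub hv)
    · simp only [if_neg h]
      exact habs.mul hv

lemma contOn_wB {m : ℤ} (hq : 2 ≤ q) : ContinuousOn (wB q m) (cone q m) := by
  have : wB q m = fun w => ‖w‖ ^ 2 - wA q m w := by
    funext w
    have := wA_add_wB q m w
    linarith
  rw [this]
  exact ((continuous_norm.pow 2).continuousOn).sub (contOn_wA q hq)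

lemma gA_shift (m : ℤ) : gA q (m + 2) = gA q m + 1 := by
  have h := gAi_add m 1
  rw [gA, gA, show m + 2 = m + 2 * 1 by ring, h]
  push_cast
  ring

lemma gB_shift (m : ℤ) : gB q (m + 2) = gB q m + 1 := by
  have h := gBi_add m 1
  rw [gB, gB, show m + 2 = m + 2 * 1 by ring, h]
  push_cast
  ring

-- coordinates on S3
def pt0 (z : S3) : ℂ := (z : EuclideanSpace ℂ (Fin 2)) 0
def pt1 (z : S3) : ℂ := (z : EuclideanSpace ℂ (Fin 2)) 1

lemma cont_pt0 : Continuous (pt0 : S3 → ℂ) :=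
  (EuclideanSpace.proj (0 : Fin 2)).continuous.comp continuous_subtype_val
lemma cont_pt1 : Continuous (pt1 : S3 → ℂ) :=
  (EuclideanSpace.proj (1 : Fin 2)).continuous.comp continuous_subtype_val

lemma sum_sq (z : S3) : ‖pt0 z‖ ^ 2 + ‖pt1 z‖ ^ 2 = 1 := by
  have hz : ‖(z : EuclideanSpace ℂ (Fin 2))‖ = 1 := mem_sphere_zero_iff_norm.mp z.2
  have := EuclideanSpace.norm_eq (z : EuclideanSpace ℂ (Fin 2))
  rw [hz] at this
  have h2 : ∑ i : Fin 2, ‖(z : EuclideanSpace ℂ (Fin 2)) i‖ ^ 2 = 1 := by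
    have hnn : (0:ℝ) ≤ ∑ i : Fin 2, ‖(z : EuclideanSpace ℂ (Fin 2)) i‖ ^ 2 := by positivity
    nlinarith [Real.sq_sqrt hnn, Real.sqrt_nonneg (∑ i : Fin 2, ‖(z : EuclideanSpace ℂ (Fin 2)) i‖ ^ 2)]
  rw [Fin.sum_univ_two] at h2
  simpa [pt0, pt1] using h2

def tvec (m m' : ℤ) (z : S3) : Fin 4 → ℝ :=
  ![wA q m (pt0 z), wB q m (pt0 z), wA q m' (pt1 z), wB q m' (pt1 z)]

lemma tvec_mem (m m' : ℤ) (z : S3) : tvec q m m' z ∈ stdSimplex ℝ (Fin 4) := by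
  constructor
  · intro i
    fin_cases i <;>
      simp [tvec, wA_nonneg, wB_nonneg]
  · rw [Fin.sum_univ_four]
    show wA q m (pt0 z) + wB q m (pt0 z) + wA q m' (pt1 z) + wB q m' (pt1 z) = 1
    have h0 := wA_add_wB q m (pt0 z)
    have h1 := wA_add_wB q m' (pt1 z)
    have := sum_sq z
    linarith

def gvec (m m' : ℤ) : Fin 4 → ZMod q := ![gA q m, gB q m, gA q m', gB q m']

def FF (m m' : ℤ) (z : S3) : Join (ZMod q) 4 :=
  Quot.mk _ (⟨tvec q m m' z, tvec_mem q m m' z⟩, gvec q m m')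

lemma FF_welldef {m m' M M' : ℤ} {z : S3} (hq : 2 ≤ q)
    (h0 : pt0 z ∈ cone q m) (h0' : pt0 z ∈ cone q M)
    (h1 : pt1 z ∈ cone q m') (h1' : pt1 z ∈ cone q M') :
    FF q m m' z = FF q M M' z := by
  obtain ⟨eA0, eB0, gA0, gB0⟩ := factor_compat q hq h0 h0'
  obtain ⟨eA1, eB1, gA1, gB1⟩ := factor_compat q hq h1 h1'
  apply Quot.sound
  constructor
  · apply Subtype.ext
    funext i
    fin_cases i <;> simp [tvec, eA0, eB0, eA1, eB1]
  · intro i hi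
    fin_cases i
    · exact gA0 hi
    · exact gB0 hi
    · exact gA1 hi
    · exact gB1 hi

def chf (hq : 2 ≤ q) (w : ℂ) : ℤ := (exists_cone_bdd q hq w).choose

lemma chf_spec (hq : 2 ≤ q) (w : ℂ) :
    0 ≤ chf q hq w ∧ chf q hq w < 2 * q ∧ w ∈ cone q (chf q hq w) :=
  (exists_cone_bdd q hq w).choose_spec

def gmap (hq : 2 ≤ q) (z : S3) : Join (ZMod q) 4 :=
  FF q (chf q hq (pt0 z)) (chf q hq (pt1 z)) z

def pset (m m' : ℤ) : Set S3 := {z | pt0 z ∈ cone q m ∧ pt1 z ∈ cone q m'}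

lemma pset_closed (m m' : ℤ) : IsClosed (pset q m m') := by
  have h0 : IsClosed ((pt0 : S3 → ℂ) ⁻¹' cone q m) := (cone_closed q m).preimage cont_pt0
  have h1 : IsClosed ((pt1 : S3 → ℂ) ⁻¹' cone q m') := (cone_closed q m').preimage cont_pt1
  exact h0.inter h1

lemma contOn_FF {m m' : ℤ} (hq : 2 ≤ q) : ContinuousOn (FF q m m') (pset q m m') := by
  apply Continuous.comp_continuousOn (continuous_quot_mk)
  apply ContinuousOn.prodMk
  · rw [Topology.IsInducing.subtypeVal.continuousOn_iff]
    apply continuousOn_pi.mpr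
    intro i
    fin_cases i <;>
      simp only [tvec, Matrix.cons_val_zero, Matrix.cons_val_one, Matrix.head_cons,
        Matrix.cons_val_two, Matrix.tail_cons, Matrix.cons_val_three]
    · exact (contOn_wA q hq).comp cont_pt0.continuousOn (fun z hz => hz.1)
    · exact (contOn_wB q hq).comp cont_pt0.continuousOn (fun z hz => hz.1)
    · exact (contOn_wA q hq).comp cont_pt1.continuousOn (fun z hz => hz.2)
    · exact (contOn_wB q hq).comp cont_pt1.continuousOn (fun z hz => hz.2)
  · exact continuousOn_const

lemma cont_gmap (hq : 2 ≤ q) : Continuous (gmap q hq) := by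
  have hqpos : 0 < 2 * q := by omega
  set s : Fin (2*q) × Fin (2*q) → Set S3 :=
    fun p => pset q ((p.1 : ℕ) : ℤ) ((p.2 : ℕ) : ℤ) with hs
  apply LocallyFinite.continuous (locallyFinite_of_finite s)
  · ext z
    simp only [Set.mem_iUnion, Set.mem_univ, iff_true]
    obtain ⟨m0, hm00, hm01, hm0⟩ := exists_cone_bdd q hq (pt0 z)
    obtain ⟨m1, hm10, hm11, hm1⟩ := exists_cone_bdd q hq (pt1 z)
    refine ⟨(⟨m0.toNat, by omega⟩, ⟨m1.toNat, by omega⟩), ?_, ?_⟩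
    · simpa [hs, pset, Int.toNat_of_nonneg hm00] using hm0
    · simpa [hs, pset, Int.toNat_of_nonneg hm10] using hm1
  · intro p
    exact pset_closed q _ _
  · intro p
    apply (contOn_FF q hq).congr
    intro z hz
    exact FF_welldef q hq (chf_spec q hq (pt0 z)).2.2 hz.1 (chf_spec q hq (pt1 z)).2.2 hz.2

lemma pt0_rot (c : ℂ) (hc : ‖c‖ = 1) (z : S3) :
    pt0 (rotS3 c hc z) = c * pt0 z := rfl

lemma pt1_rot (c : ℂ) (hc : ‖c‖ = 1) (z : S3) :
    pt1 (rotS3 c hc z) = c * pt1 z := rfl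

lemma FF_equivar (hq : 2 ≤ q) (m m' : ℤ) (z : S3) (hc : ‖zet q‖ = 1) :
    FF q (m + 2) (m' + 2) (rotS3 (zet q) hc z) = Join.addAct (FF q m m' z) 1 := by
  have hq0 : q ≠ 0 := by omega
  show Quot.mk _ _ = Quot.mk _ _
  congr 1
  refine Prod.ext ?_ ?_
  · apply Subtype.ext
    show tvec q (m+2) (m'+2) (rotS3 (zet q) hc z) = tvec q m m' z
    funext i
    fin_cases i <;>
      simp [tvec, pt0_rot, pt1_rot, wA_shift q hq0, wB_shift q hq0]
  · show gvec q (m+2) (m'+2) = fun i => gvec q m m' i + 1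
    funext i
    fin_cases i <;>
      simp [gvec, gA_shift, gB_shift]

theorem main (hq : 2 ≤ q) :
    ∃ g : S3 → Join (ZMod q) 4,
      Continuous g ∧
      ∀ z : S3,
        g (rotS3 (Complex.exp ((2 * Real.pi / q : ℝ) * Complex.I))
            (Complex.norm_exp_ofReal_mul_I _) z) =
          Join.addAct (g z) (1 : ZMod q) := by
  have hq0 : q ≠ 0 := by omega
  refine ⟨gmap q hq, cont_gmap q hq, ?_⟩
  intro z
  have hc : ‖zet q‖ = 1 := by
    rw [zet]; exact Complex.norm_exp_ofReal_mul_I _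
  show gmap q hq (rotS3 (zet q) _ z) = Join.addAct (gmap q hq z) 1
  rw [gmap, gmap]
  have h0 : pt0 (rotS3 (zet q) hc z) ∈ cone q (chf q hq (pt0 (rotS3 (zet q) hc z))) :=
    (chf_spec q hq _).2.2
  have h1 : pt1 (rotS3 (zet q) hc z) ∈ cone q (chf q hq (pt1 (rotS3 (zet q) hc z))) :=
    (chf_spec q hq _).2.2
  have h0' : pt0 (rotS3 (zet q) hc z) ∈ cone q (chf q hq (pt0 z) + 2) := by
    rw [pt0_rot]
    exact (cone_shift q hq0 _ _).mpr (chf_spec q hq (pt0 z)).2.2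
  have h1' : pt1 (rotS3 (zet q) hc z) ∈ cone q (chf q hq (pt1 z) + 2) := by
    rw [pt1_rot]
    exact (cone_shift q hq0 _ _).mpr (chf_spec q hq (pt1 z)).2.2
  rw [FF_welldef q hq h0 h0' h1 h1']
  exact FF_equivar q hq _ _ z hc

end Stmt12Aux

/-- With `ζ = exp(2πi/q)`, there is a continuous map
`g : S³ → (ℤ/qℤ)^{*4}` such that `g(ζ·z) = g(z) + 1̄` for all `z ∈ S³`. -/
theorem stmt12 (q : ℕ) (hq : 2 ≤ q) :
    ∃ g : S3 → Join (ZMod q) 4,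
      Continuous g ∧
      ∀ z : S3,
        g (rotS3 (Complex.exp ((2 * Real.pi / q : ℝ) * Complex.I))
            (Complex.norm_exp_ofReal_mul_I _) z) =
          Join.addAct (g z) (1 : ZMod q) :=
  Stmt12Aux.main q hq
end
end
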